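/- arXiv:1306.6523 — 6 statements merged into one kernel-verified Lean document; each statement's English description precedes it below -/
import Mathlib

section
/- In any subtraction algebra with a compatible monoid structure (+,0) (unit equal to the subtraction zero), the addition is uniquely determined by s via the formula x + y = s(x, s(0, y)). -/
/-- In a subtraction algebra with compatible monoid structure, addition is
determined by `x + y = s x (s z y)`. -/
theorem subtraction_algebra_add_determined
    {M : Type*} (s : M → M → M) (z : M)
    (hss : ∀ x : M, s x x = z) (hsz : ∀ x : M, s x z = x)
    (add : M → M → M)
    (hassoc : ∀ x y w : M, add (add x y) w = add x (add y w))
    (hzl : ∀ x : M, add z x = x) (hzr : ∀ x : M, add x z = x)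
    (hcompat : ∀ x y u v : M, s (add x y) (add u v) = add (s x u) (s y v)) :
    ∀ x y : M, add x y = s x (s z y) := by
  intro x y
  have key : ∀ w : M, add (s z w) w = z := by
    intro w
    have h := hcompat z w w z
    rw [hzl, hzr, hss, hsz] at h
    exact h.symm
  have hzz : ∀ w : M, s z (s z w) = w := by
    intro w
    have h := hcompat (s z w) w (s z w) z
    rw [key, hzr, hss, hsz, hzl] at h
    exact h
  have h2 := hcompat x z z (s z y)
  rw [hzr, hzl, hsz, hzz] at h2
  exact h2.symm
end

section
/- In an n-permutability algebra (for any n ≥ 2), every binary relation R on the algebra that is reflexive, transitive, and compatible with all operations θ_1, ..., θ_{n-1} is symmetric. -/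
/-- In an n-permutability algebra, every reflexive transitive compatible relation
is symmetric. -/
theorem nPerm_preorder_symmetric
    {A : Type*} (n : ℕ) (hn : 2 ≤ n)
    (θ : ℕ → A → A → A → A)
    (h1 : ∀ s t : A, θ 1 s t t = s)
    (hmid : ∀ i : ℕ, 1 ≤ i → i ≤ n - 2 → ∀ s t : A, θ i s s t = θ (i + 1) s t t)
    (hlast : ∀ s t : A, θ (n - 1) s s t = t)
    (R : A → A → Prop)
    (hrefl : ∀ x : A, R x x)
    (htrans : ∀ x y w : A, R x y → R y w → R x w)
    (hcompat : ∀ i : ℕ, 1 ≤ i → i ≤ n - 1 →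
      ∀ a a' b b' c c' : A, R a a' → R b b' → R c c' → R (θ i a b c) (θ i a' b' c')) :
    ∀ x y : A, R x y → R y x := by
  intro x y hxy
  have key : ∀ i : ℕ, 1 ≤ i → i ≤ n - 1 → R y (θ i y y x) := by
    intro i hi
    induction i, hi using Nat.le_induction with
    | base =>
      intro _
      have h := hcompat 1 le_rfl (by omega) y y x y x x (hrefl y) hxy (hrefl x)
      rw [h1 y x] at h
      exact h
    | succ i hi ih =>
      intro hle
      have hi2 : i ≤ n - 2 := by omega
      have hy : R y (θ i y y x) := ih (by omega)
      have heq := hmid i hi hi2 y x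
      have h := hcompat (i + 1) (by omega) (by omega) y y x y x x (hrefl y) hxy (hrefl x)
      rw [← heq] at h
      exact htrans _ _ _ hy h
  have h := key (n - 1) (by omega) le_rfl
  rwa [hlast y x] at h
end

section
/- In an n-permutability algebra (n ≥ 2), for every reflexive compatible relation R, the opposite relation R° is contained in R^{n-1}, the (n-1)-fold relational composite of R with itself. -/
/-- The k-fold relational composite of a relation with itself (with `relPow R 0` the
equality relation). -/
def relPow {A : Type*} (R : A → A → Prop) : ℕ → A → A → Prop
  | 0 => fun x y => x = y
  | k + 1 => fun x y => ∃ w, R x w ∧ relPow R k w y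

/-- In an n-permutability algebra, for every reflexive compatible relation R,
the opposite relation R° is contained in R^{n-1}. -/
theorem nPerm_opposite_le_pow
    {A : Type*} (n : ℕ) (hn : 2 ≤ n)
    (θ : ℕ → A → A → A → A)
    (h1 : ∀ s t : A, θ 1 s t t = s)
    (hmid : ∀ i : ℕ, 1 ≤ i → i ≤ n - 2 → ∀ s t : A, θ i s s t = θ (i + 1) s t t)
    (hlast : ∀ s t : A, θ (n - 1) s s t = t)
    (R : A → A → Prop)
    (hrefl : ∀ x : A, R x x)
    (hcompat : ∀ i : ℕ, 1 ≤ i → i ≤ n - 1 →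
      ∀ a a' b b' c c' : A, R a a' → R b b' → R c c' → R (θ i a b c) (θ i a' b' c')) :
    ∀ x y : A, R x y → relPow R (n - 1) y x := by
  intro x y hxy
  set m := n - 1 with hm
  have hm1 : 1 ≤ m := by omega
  -- key : for all k with 1 ≤ k ≤ m, relPow R k (θ (m - k + 1) y x x) x
  have key : ∀ k, 1 ≤ k → k ≤ m → relPow R k (θ (m - k + 1) y x x) x := by
    intro k
    induction k with
    | zero => omega
    | succ k ih =>
      intro _ hk
      by_cases hk0 : k = 0
      · subst hk0
        refine ⟨x, ?_, rfl⟩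
        have := hcompat m (by omega) (by omega) y y x y x x
          (hrefl y) hxy (hrefl x)
        have hme : m - (0 + 1) + 1 = m := by omega
        rw [hme]
        rwa [hlast y x] at this
      · have hk1 : 1 ≤ k := by omega
        have hkm : k ≤ m := by omega
        set i := m - (k + 1) + 1 with hi
        have hi1 : 1 ≤ i := by omega
        have hin2 : i ≤ n - 2 := by omega
        refine ⟨θ (i + 1) y x x, ?_, ?_⟩
        · have := hcompat i hi1 (by omega) y y x y x x (hrefl y) hxy (hrefl x)
          rw [hmid i hi1 hin2 y x] at this
          exact this
        · have : m - k + 1 = i + 1 := by omega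
          rw [← this]
          exact ih hk1 hkm
  have := key m hm1 le_rfl
  rw [show m - m + 1 = 1 by omega, h1 y x] at this
  exact this
end

section
/- In an n-permutability algebra (n ≥ 2), every reflexive compatible relation R satisfies R^n ⊆ R^{n-1}. -/
lemma chain_relPow {A : Type*} (R : A → A → Prop) :
    ∀ k (a : ℕ → A), (∀ i < k, R (a i) (a (i + 1))) → relPow R k (a 0) (a k) := by
  intro k
  induction k with
  | zero => intro a _; rfl
  | succ k ih =>
    intro a h
    exact ⟨a 1, h 0 (Nat.succ_pos k),
      ih (fun i => a (i + 1)) (fun i hi => h (i + 1) (by omega))⟩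

lemma relPow_chain {A : Type*} (R : A → A → Prop) :
    ∀ k x y, relPow R k x y →
      ∃ a : ℕ → A, a 0 = x ∧ a k = y ∧ ∀ i < k, R (a i) (a (i + 1)) := by
  intro k
  induction k with
  | zero => intro x y h; exact ⟨fun _ => x, rfl, h, fun i hi => absurd hi (by omega)⟩
  | succ k ih =>
    rintro x y ⟨w, hw, hr⟩
    obtain ⟨a, ha0, hak, hstep⟩ := ih w y hr
    refine ⟨fun i => if i = 0 then x else a (i - 1), rfl, by simp [hak], ?_⟩
    intro i hi
    match i with
    | 0 => simpa [ha0] using hw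
    | j + 1 =>
      simpa using hstep j (by omega)

/-- In an n-permutability algebra, every reflexive compatible relation R
satisfies R^n ⊆ R^{n-1}. -/
theorem nPerm_pow_le_pow
    {A : Type*} (n : ℕ) (hn : 2 ≤ n)
    (θ : ℕ → A → A → A → A)
    (h1 : ∀ s t : A, θ 1 s t t = s)
    (hmid : ∀ i : ℕ, 1 ≤ i → i ≤ n - 2 → ∀ s t : A, θ i s s t = θ (i + 1) s t t)
    (hlast : ∀ s t : A, θ (n - 1) s s t = t)
    (R : A → A → Prop)
    (hrefl : ∀ x : A, R x x)
    (hcompat : ∀ i : ℕ, 1 ≤ i → i ≤ n - 1 →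
      ∀ a a' b b' c c' : A, R a a' → R b b' → R c c' → R (θ i a b c) (θ i a' b' c')) :
    ∀ x y : A, relPow R n x y → relPow R (n - 1) x y := by
  obtain ⟨k, rfl⟩ : ∃ k, n = k + 2 := ⟨n - 2, by omega⟩
  have hsub1 : k + 2 - 1 = k + 1 := rfl
  have hsub2 : k + 2 - 2 = k := rfl
  rw [hsub1] at hlast ⊢
  rw [hsub2] at hmid
  rw [hsub1] at hcompat
  intro x y hxy
  obtain ⟨a, ha0, han, hstep⟩ := relPow_chain R (k + 2) x y hxy
  -- the new chain
  set b : ℕ → A := fun i =>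
    if i = k + 1 then a (k + 2) else θ (i + 1) (a i) (a (i + 1)) (a (i + 1)) with hb
  have hb0 : b 0 = x := by
    simp only [hb]
    rw [if_neg (by omega)]
    rw [h1, ha0]
  have hbk : b (k + 1) = y := by simp [hb, han]
  have hchain : ∀ i < k + 1, R (b i) (b (i + 1)) := by
    intro i hi
    by_cases hik : i = k
    · subst hik
      simp only [hb]
      rw [if_neg (by omega)]
      simp only [if_true]
      rw [← hlast (a (i + 1)) (a (i + 2))]
      exact hcompat (i + 1) (by omega) (by omega) _ _ _ _ _ _
        (hstep i (by omega)) (hrefl _) (hstep (i + 1) (by omega))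
    · simp only [hb]
      rw [if_neg (by omega), if_neg (by omega)]
      rw [← hmid (i + 1) (by omega) (by omega) (a (i + 1)) (a (i + 2))]
      exact hcompat (i + 1) (by omega) (by omega) _ _ _ _ _ _
        (hstep i (by omega)) (hrefl _) (hstep (i + 1) (by omega))
  have := chain_relPow R (k + 1) b hchain
  rwa [hb0, hbk] at this
end

section
/- In a 3-permutability algebra (with operations θ_1, θ_2 satisfying θ_1(s,t,t)=s, θ_1(s,s,t)=θ_2(s,t,t), θ_2(s,s,t)=t), every compatible reflexive and transitive relation is an equivalence relation. -/
/-- In a 3-permutability algebra, every compatible reflexive and transitive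
relation is an equivalence relation. -/
theorem goursat_preorder_is_equivalence
    {A : Type*} (θ1 θ2 : A → A → A → A)
    (h1 : ∀ s t : A, θ1 s t t = s)
    (h2 : ∀ s t : A, θ1 s s t = θ2 s t t)
    (h3 : ∀ s t : A, θ2 s s t = t)
    (R : A → A → Prop)
    (hrefl : ∀ x : A, R x x)
    (htrans : ∀ x y w : A, R x y → R y w → R x w)
    (hcompat1 : ∀ a a' b b' c c' : A, R a a' → R b b' → R c c' →
      R (θ1 a b c) (θ1 a' b' c'))
    (hcompat2 : ∀ a a' b b' c c' : A, R a a' → R b b' → R c c' →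
      R (θ2 a b c) (θ2 a' b' c')) :
    Equivalence R := by
  refine ⟨hrefl, ?_, fun h h' => htrans _ _ _ h h'⟩
  intro x y hxy
  have hA : R (θ2 x y y) x := by
    have := hcompat1 x x x y y y (hrefl x) hxy (hrefl y)
    rwa [h1, h2] at this
  have hB : R y (θ2 x y y) := by
    have := hcompat2 x x x y y y (hrefl x) hxy (hrefl y)
    rwa [h3] at this
  exact htrans _ _ _ hB hA
end

section
/- Every implication algebra carries two 3-permutability (Goursat) operations: θ_1(x,y,z) = (zy)((xy)x) and θ_2(x,y,z) = (xy)((zy)z) satisfy θ_1(x,y,y)=x, θ_1(x,x,y)=θ_2(x,y,y), and θ_2(x,x,y)=y. -/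
/-- Every implication algebra carries 3-permutability (Goursat) operations
θ₁(x,y,z) = (zy)((xy)x) and θ₂(x,y,z) = (xy)((zy)z). -/
theorem implication_algebra_goursat_terms
    {I : Type*} (mul : I → I → I)
    (hax1 : ∀ x y : I, mul (mul x y) x = x)
    (hax2 : ∀ x y : I, mul (mul x y) y = mul (mul y x) x)
    (hax3 : ∀ x y z : I, mul x (mul y z) = mul y (mul x z)) :
    (∀ x y : I, mul (mul y y) (mul (mul x y) x) = x) ∧
    (∀ x y : I, mul (mul y x) (mul (mul x x) x) = mul (mul x y) (mul (mul y y) y)) ∧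
    (∀ x y : I, mul (mul x x) (mul (mul y x) y) = y) := by
  -- L1 : a (a b) = a b
  have L1 : ∀ a b : I, mul a (mul a b) = mul a b := by
    intro a b
    have h := hax1 (mul a b) a
    rw [hax1 a b] at h
    exact h
  -- aa = bb for all a b
  have E : ∀ a b : I, mul a a = mul b b := by
    intro a b
    set v := mul a (mul b b) with hv
    have hvab : v = mul b (mul a b) := hax3 a b b
    have hav : mul a v = v := by
      rw [hvab, hax3 a b (mul a b), L1 a b]
    have hva : mul v a = a := hax1 a (mul b b)
    have hvv_aa : mul v v = mul a a := by
      have := hax2 a v  -- (a v) v = (v a) a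
      rw [hav, hva] at this
      exact this
    have hbv : mul b v = v := by
      rw [hv, hax3 b a (mul b b), L1 b b]
    have hvb : mul v b = b := by
      rw [hvab]; exact hax1 b (mul a b)
    have hvv_bb : mul v v = mul b b := by
      have := hax2 b v
      rw [hbv, hvb] at this
      exact this
    rw [← hvv_aa, hvv_bb]
  -- unit law: (y y) x = x
  have U : ∀ x y : I, mul (mul y y) x = x := by
    intro x y
    rw [E y x]; exact hax1 x x
  refine ⟨fun x y => ?_, fun x y => ?_, fun x y => ?_⟩
  · rw [hax1 x y, U x y]
  · rw [hax1 x x, U y y, hax2 y x]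
  · rw [hax1 y x, U y x]
end
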